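/- Let F be a tiered forest with two tiers on vertex set U, let CT(F) be the complete tiered graph on U determined by the tier partition of F, and let F' be the dual forest with CT(F') the complete tiered graph determined by F'. With ω_1(e) = u + v/N for an edge joining u < v, and ω_2(e) = (N+1−v) + (N+1−u)/N (where N = max U), the external activity of F in CT(F) with respect to ω_1 equals the external activity of F' in CT(F') with respect to ω_2. -/

import Mathlib

open Finset

attribute [local instance 10] Classical.propDecidable

noncomputable section

/-- An edge of a simple graph on `ℕ`, stored as an ordered pair `(u,v)` with `u < v` intended. -/
abbrev PEdge : Type := ℕ × ℕ

/-- A labelled edge (for multigraphs): an endpoint pair together with a label. -/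
abbrev LEdge : Type := (ℕ × ℕ) × ℕ

def adjP (E : Finset PEdge) (u v : ℕ) : Prop := (u, v) ∈ E ∨ (v, u) ∈ E

def reachP (E : Finset PEdge) : ℕ → ℕ → Prop := Relation.ReflTransGen (adjP E)

def connP (V : Finset ℕ) (E : Finset PEdge) : Prop :=
  (∀ e ∈ E, e.1 ∈ V ∧ e.2 ∈ V) ∧ ∀ u ∈ V, ∀ v ∈ V, reachP E u v

def IsTreeOn (V : Finset ℕ) (E : Finset PEdge) : Prop := connP V E ∧ E.card + 1 = V.card

/-- A graph on a finite set of naturals together with a tiering map. -/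
structure PreGraph where
  V : Finset ℕ
  E : Finset PEdge
  t : ℕ → ℕ

/-- `G` is a tiered graph with two tiers. -/
def IsTiered (G : PreGraph) : Prop :=
  (∀ v ∈ G.V, 0 < v) ∧
  (∀ e ∈ G.E, e.1 ∈ G.V ∧ e.2 ∈ G.V ∧ e.1 < e.2) ∧
  (∀ v ∈ G.V, G.t v = 1 ∨ G.t v = 2) ∧
  (∀ e ∈ G.E, G.t e.1 < G.t e.2)

/-- acyclicity: every edge is a bridge. -/
def IsForest (G : PreGraph) : Prop := ∀ e ∈ G.E, ¬ reachP (G.E.erase e) e.1 e.2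

def IsTreeG (G : PreGraph) : Prop := IsTreeOn G.V G.E

/-- the connected component (vertex set) of `x`. -/
def comp (V : Finset ℕ) (E : Finset PEdge) (x : ℕ) : Finset ℕ :=
  V.filter fun y => reachP E x y

/-- the order-reversing involution `x_i ↦ x_{s+1-i}` of a finite set `V = {x_1 < ... < x_s}`. -/
def flipMap (V : Finset ℕ) (x : ℕ) : ℕ :=
  if hx : x ∈ V then
    ((V.orderIsoOfFin rfl)
      ⟨V.card - 1 - ((V.orderIsoOfFin rfl).symm ⟨x, hx⟩).1, by
        have h := ((V.orderIsoOfFin rfl).symm ⟨x, hx⟩).isLt; omega⟩).1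
  else x

/-- the dual of a (connected) tiered graph, via the global vertex ordering. -/
def dual (G : PreGraph) : PreGraph where
  V := G.V
  E := G.E.image fun e => (flipMap G.V e.2, flipMap G.V e.1)
  t := fun x => if x ∈ G.V then 3 - G.t (flipMap G.V x) else G.t x

/-- the componentwise dual of a (possibly disconnected) tiered graph. -/
def cdual (G : PreGraph) : PreGraph where
  V := G.V
  E := G.E.image fun e => (flipMap (comp G.V G.E e.1) e.2, flipMap (comp G.V G.E e.1) e.1)
  t := fun x => if x ∈ G.V then 3 - G.t (flipMap (comp G.V G.E x) x) else G.t x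

/-- the recursive weight of a tiered tree (fuel-based implementation; the recursion
depth is bounded by the number of vertices). -/
def weightAux : ℕ → PreGraph → ℕ
  | 0, _ => 0
  | fuel + 1, T =>
    if h : 2 ≤ T.V.card then
      let v := T.V.min' (Finset.card_pos.mp (by omega))
      let V' := T.V.erase v
      let E' := T.E.filter fun e => e.1 ≠ v ∧ e.2 ≠ v
      ∑ u ∈ V'.filter (fun u => adjP T.E v u),
        (((comp V' E' u).filter fun y => y < u ∧ T.t v < T.t y).card
          + weightAux fuel ⟨comp V' E' u, E'.filter fun e => e.1 ∈ comp V' E' u, T.t⟩)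
    else 0

def weight (T : PreGraph) : ℕ := weightAux T.V.card T

/-- edges of a complete tiered graph with tier 1 vertex set `A` and tier 2 vertex set `B`. -/
def ctE2 (A B : Finset ℕ) : Finset PEdge := (A ×ˢ B).filter fun e => e.1 < e.2

/-- the edge set of the complete tiered graph determined by a two-tier tiered graph `G`. -/
def ctE (G : PreGraph) : Finset PEdge :=
  ctE2 (G.V.filter fun v => G.t v = 1) (G.V.filter fun v => G.t v = 2)

/-- edge set of the complete tiered graph on `[n]` determined by a tiering map `t`. -/
def ctEM (n : ℕ) (t : ℕ → ℕ) : Finset PEdge :=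
  (Finset.Icc 1 n ×ˢ Finset.Icc 1 n).filter fun e => e.1 < e.2 ∧ t e.1 < t e.2

def extActiveP (T : Finset PEdge) (ω : PEdge → ℝ) (e : PEdge) : Prop :=
  e ∉ T ∧ reachP T e.1 e.2 ∧ ∀ e' ∈ T, ¬ reachP (T.erase e') e.1 e.2 → ω e < ω e'

/-- external activity of the spanning forest `T` in the graph with edge set `E`. -/
def eaP (E T : Finset PEdge) (ω : PEdge → ℝ) : ℕ := (E.filter (extActiveP T ω)).card

def adjL (E : Finset LEdge) (u v : ℕ) : Prop := ∃ e ∈ E, e.1 = (u, v) ∨ e.1 = (v, u)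
def reachL (E : Finset LEdge) : ℕ → ℕ → Prop := Relation.ReflTransGen (adjL E)
def connL (V : Finset ℕ) (E : Finset LEdge) : Prop := ∀ u ∈ V, ∀ v ∈ V, reachL E u v
def IsLTree (V : Finset ℕ) (T : Finset LEdge) : Prop := connL V T ∧ T.card + 1 = V.card

def extActiveL (T : Finset LEdge) (ω : LEdge → ℝ) (e : LEdge) : Prop :=
  e ∉ T ∧ reachL T e.1.1 e.1.2 ∧ ∀ e' ∈ T, ¬ reachL (T.erase e') e.1.1 e.1.2 → ω e < ω e'

def eaL (E T : Finset LEdge) (ω : LEdge → ℝ) : ℕ := (E.filter (extActiveL T ω)).card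

def omega1 (N : ℕ) (e : PEdge) : ℝ := (e.1 : ℝ) + (e.2 : ℝ) / (N : ℝ)
def omega2 (N : ℕ) (e : PEdge) : ℝ := ((N + 1 - e.2 : ℕ) : ℝ) + ((N + 1 - e.1 : ℕ) : ℝ) / (N : ℝ)
def omegaLex (n : ℕ) (e : PEdge) : ℝ := ((e.1 * (n + 1) + e.2 : ℕ) : ℝ)

/-- representative (minimum) of the component of `x` in the forest `F` on vertex set `V`. -/
def rep (V : Finset ℕ) (F : Finset LEdge) (x : ℕ) : ℕ :=
  if hx : x ∈ V then
    (V.filter fun y => reachL F x y).min'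
      ⟨x, Finset.mem_filter.mpr ⟨hx, Relation.ReflTransGen.refl⟩⟩
  else x

/-- image of an edge in the quotient graph `G • F`; the label encodes the original edge. -/
def quotEdge (ρ : ℕ → ℕ) (e : LEdge) : LEdge :=
  ((ρ e.1.1, ρ e.1.2), Nat.pair (Nat.pair e.1.1 e.1.2) e.2)

/-- recover the original edge from a quotient edge. -/
def decodeE (e : LEdge) : LEdge :=
  (((Nat.unpair (Nat.unpair e.2).1).1, (Nat.unpair (Nat.unpair e.2).1).2), (Nat.unpair e.2).2)

/-- tiering map on `[n]` induced by `f : Fin n → Fin m` (tiers `1,...,m`). -/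
def tf (n m : ℕ) (f : Fin n → Fin m) : ℕ → ℕ := fun v =>
  if h : v ∈ Finset.Icc 1 n then
    (f ⟨v - 1, by have := Finset.mem_Icc.mp h; omega⟩).1 + 1
  else 0

/-- `G` is a tiered graph with `m` tiers. -/
def IsTieredM (m : ℕ) (G : PreGraph) : Prop :=
  (∀ e ∈ G.E, e.1 ∈ G.V ∧ e.2 ∈ G.V ∧ e.1 < e.2) ∧
  (∀ v ∈ G.V, G.t v ∈ Finset.Icc 1 m) ∧
  (∀ e ∈ G.E, G.t e.1 < G.t e.2) ∧
  (∀ i ∈ Finset.Icc 1 m, ∃ v ∈ G.V, G.t v = i)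

/-- weight polynomial `P_p(q)` (recursive weight), evaluated at `q`. -/
def Pw (n m : ℕ) (p : ℕ → ℕ) (q : ℤ) : ℤ :=
  ∑ f : Fin n → Fin m,
    ∑ E ∈ ((Finset.Icc 1 n ×ˢ Finset.Icc 1 n).powerset.filter fun E =>
        IsTreeG ⟨Finset.Icc 1 n, E, tf n m f⟩ ∧ IsTieredM m ⟨Finset.Icc 1 n, E, tf n m f⟩ ∧
        ∀ i ∈ Finset.Icc 1 m, ((Finset.Icc 1 n).filter fun v => tf n m f v = i).card = p i),
      q ^ weight ⟨Finset.Icc 1 n, E, tf n m f⟩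

/-- weight polynomial `P_p(q)` with the weight of a tiered tree given by its external
activity in the complete tiered graph it determines (lexicographic edge order). -/
def PwEA (n m : ℕ) (p : ℕ → ℕ) (q : ℤ) : ℤ :=
  ∑ f : Fin n → Fin m,
    ∑ E ∈ ((Finset.Icc 1 n ×ˢ Finset.Icc 1 n).powerset.filter fun E =>
        IsTreeG ⟨Finset.Icc 1 n, E, tf n m f⟩ ∧ IsTieredM m ⟨Finset.Icc 1 n, E, tf n m f⟩ ∧
        ∀ i ∈ Finset.Icc 1 m, ((Finset.Icc 1 n).filter fun v => tf n m f v = i).card = p i),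
      q ^ eaP (ctEM n (tf n m f)) E (omegaLex n)

/-- `T^c_G(y)`: the Tutte evaluation `T_G(1,y)` (spanning tree expansion) for a connected
graph, `0` otherwise. -/
def TcP (V : Finset ℕ) (E : Finset PEdge) (ω : PEdge → ℝ) (y : ℤ) : ℤ :=
  if connP V E then ∑ T ∈ E.powerset.filter (fun T => IsTreeOn V T), y ^ eaP E T ω else 0

/-- edge multiset of `H ∪ Q_S`: `H`-edges (labels `≠ 0`) together with the complete
tiered graph on `U` with tier-1 set `S` (labelled `0`). -/
def qE (U : Finset ℕ) (EH : Finset LEdge) (S : Finset ℕ) : Finset LEdge :=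
  EH ∪ (ctE2 S (U \ S)).image fun p => (p, 0)

/-- `(S,T) ↦ (S*, T*)`: the dual quasi-tiered tree. -/
def dualTree (U : Finset ℕ) (ST : Finset ℕ × Finset LEdge) : Finset ℕ × Finset LEdge :=
  (U.filter fun v =>
      (cdual ⟨U, (ST.2.filter fun e => e.2 = 0).image Prod.fst,
        fun w => if w ∈ ST.1 then 1 else 2⟩).t v = 1,
   (ST.2.filter fun e => e.2 ≠ 0) ∪
     (cdual ⟨U, (ST.2.filter fun e => e.2 = 0).image Prod.fst,
        fun w => if w ∈ ST.1 then 1 else 2⟩).E.image fun p => (p, 0))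

/-- tiered forests on `U` with tier sizes `(p1, p2)` (tier map normalised off `U`). -/
def ForestSet (U : Finset ℕ) (p1 p2 : ℕ) : Set PreGraph :=
  {F | F.V = U ∧ IsTiered F ∧ IsForest F ∧
    (U.filter fun v => F.t v = 1).card = p1 ∧
    (U.filter fun v => F.t v = 2).card = p2 ∧
    ∀ v, v ∉ U → F.t v = 0}

/-! Let `φ` reverse the vertex order inside each component of `F`. It is an involution fixing
every component, and `e ↦ (φ e.2, φ e.1)` carries `F` onto `F'` and the `CT(F)`-edges joining
two vertices of one component onto the `CT(F')`-edges of the same kind (tiers are swapped and the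
order is reversed). An externally active edge closes a cycle, so it joins two vertices of one
component, and the cycle edges lie in that component too. There `ω₁ (u, v)` and
`ω₂ (φ v, φ u) = ω₁ (N + 1 - φ u, N + 1 - φ v)` both order edges lexicographically, and
`N + 1 - φ` is increasing on a component, so the flip is a bijection between the externally
active edges of the two forests. -/

lemma reachP_symm {E : Finset PEdge} {u v : ℕ} (h : reachP E u v) : reachP E v u :=
  (@Relation.ReflTransGen.stdSymm _ (adjP E) ⟨fun _ _ h => h.symm⟩).symm _ _ h

lemma mem_of_reachP {V : Finset ℕ} {E : Finset PEdge} (hE : ∀ e ∈ E, e.1 ∈ V ∧ e.2 ∈ V)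
    {x y : ℕ} (hx : x ∈ V) (h : reachP E x y) : y ∈ V := by
  induction h with
  | refl => exact hx
  | tail _ hwy =>
    rcases hwy with h | h
    · exact (hE _ h).2
    · exact (hE _ h).1

lemma reachP_of_not_reachP_erase {E : Finset PEdge} {e₀ : PEdge} {u v : ℕ} (he₀ : e₀ ∈ E)
    (h : reachP E u v) (hne : ¬ reachP (E.erase e₀) u v) : reachP E u e₀.1 := by
  suffices ∀ w, reachP E u w → reachP (E.erase e₀) u w ∨ reachP E u e₀.1 from
    (this v h).resolve_left hne
  intro w hw
  induction hw with
  | refl => exact Or.inl .refl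
  | @tail w x hw hwx ih =>
    refine ih.elim (fun hw' => ?_) Or.inr
    by_cases hx : (w, x) = e₀ ∨ (x, w) = e₀
    · rcases hx with rfl | rfl
      · exact Or.inr hw
      · exact Or.inr (hw.tail hwx)
    · rw [not_or] at hx
      exact Or.inl (hw'.tail (hwx.imp (fun h => mem_erase.2 ⟨hx.1, h⟩)
        (fun h => mem_erase.2 ⟨hx.2, h⟩)))

lemma flipMap_eq_rev {V : Finset ℕ} {x : ℕ} (hx : x ∈ V) :
    flipMap V x = (V.orderIsoOfFin rfl ((V.orderIsoOfFin rfl).symm ⟨x, hx⟩).rev : ℕ) := by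
  rw [flipMap, dif_pos hx]
  congr 2
  exact Fin.ext (by simp only [Fin.val_rev]; omega)

lemma flipMap_mem {V : Finset ℕ} {x : ℕ} (hx : x ∈ V) : flipMap V x ∈ V := by
  rw [flipMap_eq_rev hx]
  exact Subtype.prop _

lemma flipMap_flipMap {V : Finset ℕ} {x : ℕ} (hx : x ∈ V) : flipMap V (flipMap V x) = x := by
  have h : (⟨flipMap V x, flipMap_mem hx⟩ : V) =
      V.orderIsoOfFin rfl ((V.orderIsoOfFin rfl).symm ⟨x, hx⟩).rev :=
    Subtype.ext (flipMap_eq_rev hx)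
  rw [flipMap_eq_rev (flipMap_mem hx), h]
  simp

lemma strictAntiOn_flipMap (V : Finset ℕ) : StrictAntiOn (flipMap V) V := by
  intro x hx y hy hxy
  rw [flipMap_eq_rev hx, flipMap_eq_rev hy, Subtype.coe_lt_coe, OrderIso.lt_iff_lt,
    Fin.rev_lt_rev, OrderIso.lt_iff_lt, Subtype.mk_lt_mk]
  exact hxy

lemma comp_eq_of_reachP {V : Finset ℕ} {E : Finset PEdge} {x y : ℕ} (h : reachP E x y) :
    comp V E y = comp V E x := by
  ext z
  simp only [comp, mem_filter]
  exact and_congr_right fun _ => ⟨h.trans, (reachP_symm h).trans⟩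

lemma self_mem_comp {V : Finset ℕ} {E : Finset PEdge} {x : ℕ} (hx : x ∈ V) :
    x ∈ comp V E x :=
  mem_filter.2 ⟨hx, .refl⟩

-- The vertex map of `cdual`: it reverses the order inside each component of `(V, E)`.
def compFlip (V : Finset ℕ) (E : Finset PEdge) (x : ℕ) : ℕ := flipMap (comp V E x) x

lemma compFlip_eq_flipMap {V : Finset ℕ} {E : Finset PEdge} {x y : ℕ} (hy : y ∈ comp V E x) :
    compFlip V E y = flipMap (comp V E x) y := by
  rw [compFlip, comp_eq_of_reachP (mem_filter.1 hy).2]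

lemma compFlip_mem_comp {V : Finset ℕ} {E : Finset PEdge} {x y : ℕ} (hy : y ∈ comp V E x) :
    compFlip V E y ∈ comp V E x := by
  rw [compFlip_eq_flipMap hy]
  exact flipMap_mem hy

lemma compFlip_mem {V : Finset ℕ} {E : Finset PEdge} {x : ℕ} (hx : x ∈ V) :
    compFlip V E x ∈ V :=
  (mem_filter.1 (compFlip_mem_comp (self_mem_comp (E := E) hx))).1

lemma compFlip_involutive (V : Finset ℕ) (E : Finset PEdge) :
    Function.Involutive (compFlip V E) := by
  intro x
  by_cases hx : x ∈ V
  · have hx' := self_mem_comp (E := E) hx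
    rw [compFlip_eq_flipMap (compFlip_mem_comp hx'), compFlip_eq_flipMap hx', flipMap_flipMap hx']
  · have hnot : x ∉ comp V E x := fun h => hx (mem_filter.1 h).1
    simp only [compFlip, flipMap, dif_neg hnot]

lemma strictAntiOn_compFlip (V : Finset ℕ) (E : Finset PEdge) (x : ℕ) :
    StrictAntiOn (compFlip V E) (comp V E x) :=
  (strictAntiOn_flipMap _).congr fun _ hy => (compFlip_eq_flipMap hy).symm

def flipEdge (φ : ℕ → ℕ) (e : PEdge) : PEdge := (φ e.2, φ e.1)

lemma flipEdge_involutive {φ : ℕ → ℕ} (hφ : Function.Involutive φ) :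
    Function.Involutive (flipEdge φ) := fun e => by
  simp only [flipEdge, hφ _]

lemma cdual_E (G : PreGraph) : (cdual G).E = G.E.image (flipEdge (compFlip G.V G.E)) := by
  refine image_congr fun e he => ?_
  have : comp G.V G.E e.2 = comp G.V G.E e.1 := comp_eq_of_reachP (.single (Or.inl he))
  simp only [flipEdge, compFlip, this]

lemma cdual_t (G : PreGraph) {x : ℕ} (hx : x ∈ G.V) :
    (cdual G).t x = 3 - G.t (compFlip G.V G.E x) :=
  if_pos hx

lemma adjP_image_flipEdge {φ : ℕ → ℕ} (hφ : Function.Involutive φ) (E : Finset PEdge)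
    (u v : ℕ) :
    adjP (E.image (flipEdge φ)) u v ↔ adjP E (φ u) (φ v) := by
  have hmem : ∀ e, e ∈ E.image (flipEdge φ) ↔ flipEdge φ e ∈ E := fun e => by
    conv_lhs => rw [← flipEdge_involutive hφ e]
    exact (flipEdge_involutive hφ).injective.mem_finset_image
  simp only [adjP, hmem, flipEdge]
  exact or_comm

lemma reachP_image_flipEdge {φ : ℕ → ℕ} (hφ : Function.Involutive φ) (E : Finset PEdge)
    (u v : ℕ) :
    reachP (E.image (flipEdge φ)) u v ↔ reachP E (φ u) (φ v) := by
  refine ⟨fun h => Relation.ReflTransGen.lift φ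
    (fun a b h => (adjP_image_flipEdge hφ E a b).1 h) _ _ h, fun h => ?_⟩
  have := Relation.ReflTransGen.lift φ (fun a b h => (adjP_image_flipEdge hφ E (φ a) (φ b)).2
    (by rwa [hφ a, hφ b])) _ _ h
  rwa [Function.onFun, hφ u, hφ v] at this

lemma reachP_image_flipEdge_flipEdge {φ : ℕ → ℕ} (hφ : Function.Involutive φ)
    (E : Finset PEdge) (e : PEdge) :
    reachP (E.image (flipEdge φ)) (flipEdge φ e).1 (flipEdge φ e).2 ↔ reachP E e.1 e.2 := by
  rw [reachP_image_flipEdge hφ, flipEdge, hφ, hφ]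
  exact ⟨reachP_symm, reachP_symm⟩

lemma extActiveP_image_flipEdge_iff {φ : ℕ → ℕ} (hφ : Function.Involutive φ)
    {T : Finset PEdge} {ω ω' : PEdge → ℝ} {e : PEdge}
    (hω : reachP T e.1 e.2 → ∀ e₀ ∈ T, reachP T e.1 e₀.1 →
      (ω' (flipEdge φ e) < ω' (flipEdge φ e₀) ↔ ω e < ω e₀)) :
    extActiveP (T.image (flipEdge φ)) ω' (flipEdge φ e) ↔ extActiveP T ω e := by
  have hinj := (flipEdge_involutive hφ).injective
  simp only [extActiveP, forall_mem_image, ← image_erase hinj, hinj.mem_finset_image,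
    reachP_image_flipEdge_flipEdge hφ]
  exact and_congr_right fun _ => and_congr_right fun hr => forall₂_congr fun e₀ he₀ =>
    imp_congr_right fun hbr => hω hr e₀ he₀ (reachP_of_not_reachP_erase he₀ hr hbr)

lemma omega1_lt_omega1_iff {N : ℕ} {e e' : PEdge} (h2 : e.2 ∈ Icc 1 N)
    (h2' : e'.2 ∈ Icc 1 N) :
    omega1 N e < omega1 N e' ↔ toLex e < toLex e' := by
  rw [mem_Icc] at h2 h2'
  have hN : (0 : ℝ) < N := by exact_mod_cast h2.1.trans h2.2
  have hscale : ∀ f : PEdge, omega1 N f = ((f.1 * N + f.2 : ℕ) : ℝ) / N := fun f => by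
    rw [omega1]; push_cast; field_simp
  rw [hscale, hscale, div_lt_div_iff_of_pos_right hN, Nat.cast_lt, Prod.Lex.toLex_lt_toLex]
  constructor
  · intro h
    rcases lt_trichotomy e.1 e'.1 with h1 | h1 | h1
    · exact Or.inl h1
    · exact Or.inr ⟨h1, by rw [h1] at h; omega⟩
    · have : (e'.1 + 1) * N ≤ e.1 * N := Nat.mul_le_mul_right N h1
      nlinarith
  · rintro (h1 | ⟨h1, h2⟩)
    · have : (e.1 + 1) * N ≤ e'.1 * N := Nat.mul_le_mul_right N h1
      nlinarith
    · rw [h1]; omega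

lemma toLex_lt_toLex_map_iff {g : ℕ → ℕ} {s : Set ℕ} (hg : StrictMonoOn g s) {e e' : PEdge}
    (h1 : e.1 ∈ s) (h2 : e.2 ∈ s) (h1' : e'.1 ∈ s) (h2' : e'.2 ∈ s) :
    toLex (g e.1, g e.2) < toLex (g e'.1, g e'.2) ↔ toLex e < toLex e' := by
  simp only [Prod.Lex.toLex_lt_toLex, hg.lt_iff_lt h1 h1', hg.lt_iff_lt h2 h2',
    hg.injOn.eq_iff h1 h1']

lemma omega2_flipEdge_lt_iff {V : Finset ℕ} {E : Finset PEdge} {N x : ℕ} (hV : V ⊆ Icc 1 N)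
    {e e' : PEdge} (h1 : e.1 ∈ comp V E x) (h2 : e.2 ∈ comp V E x) (h1' : e'.1 ∈ comp V E x)
    (h2' : e'.2 ∈ comp V E x) :
    omega2 N (flipEdge (compFlip V E) e) < omega2 N (flipEdge (compFlip V E) e') ↔
      omega1 N e < omega1 N e' := by
  have hmem : ∀ {y}, y ∈ comp V E x → y ∈ Icc 1 N := fun hy => hV (mem_filter.1 hy).1
  set g : ℕ → ℕ := fun y => N + 1 - compFlip V E y
  have hg : StrictMonoOn g (comp V E x) := fun a ha b hb hab => by
    have := strictAntiOn_compFlip V E x ha hb hab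
    have := mem_Icc.1 (hmem (compFlip_mem_comp ha))
    simp only [g]
    omega
  have hgmem : ∀ {y}, y ∈ comp V E x → g y ∈ Icc 1 N := fun hy => by
    have := mem_Icc.1 (hmem (compFlip_mem_comp hy))
    simp only [g, mem_Icc]
    omega
  change omega1 N (g e.1, g e.2) < omega1 N (g e'.1, g e'.2) ↔ _
  rw [omega1_lt_omega1_iff (hgmem h2) (hgmem h2'), omega1_lt_omega1_iff (hmem h2) (hmem h2')]
  exact toLex_lt_toLex_map_iff hg h1 h2 h1' h2'

lemma mem_ctE {G : PreGraph} {e : PEdge} :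
    e ∈ ctE G ↔ (e.1 ∈ G.V ∧ G.t e.1 = 1) ∧ (e.2 ∈ G.V ∧ G.t e.2 = 2) ∧ e.1 < e.2 := by
  simp only [ctE, ctE2, mem_filter, mem_product, and_assoc]

lemma flipEdge_mem_ctE_cdual_iff {F : PreGraph} (ht : ∀ v ∈ F.V, F.t v = 1 ∨ F.t v = 2)
    {e : PEdge} (h1 : e.1 ∈ F.V) (h2 : e.2 ∈ comp F.V F.E e.1) :
    flipEdge (compFlip F.V F.E) e ∈ ctE (cdual F) ↔ e ∈ ctE F := by
  have h2V : e.2 ∈ F.V := (mem_filter.1 h2).1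
  have hlt : compFlip F.V F.E e.2 < compFlip F.V F.E e.1 ↔ e.1 < e.2 :=
    (strictAntiOn_compFlip F.V F.E e.1).lt_iff_gt h2 (self_mem_comp h1)
  have ht1 := ht _ h1
  have ht2 := ht _ h2V
  rw [mem_ctE, mem_ctE]
  change (compFlip F.V F.E e.2 ∈ F.V ∧ _) ∧ (compFlip F.V F.E e.1 ∈ F.V ∧ _) ∧ _ ↔ _
  simp only [flipEdge, cdual_t F (compFlip_mem h2V), cdual_t F (compFlip_mem h1),
    compFlip_involutive F.V F.E _, hlt, compFlip_mem h1, compFlip_mem h2V, h1, h2V, true_and]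
  omega

lemma flipEdge_mem_activeEdges_cdual_iff {F : PreGraph} (hT : IsTiered F) {N : ℕ}
    (hN : ∀ v ∈ F.V, v ≤ N) (e : PEdge) :
    flipEdge (compFlip F.V F.E) e ∈
        (ctE (cdual F)).filter (extActiveP (cdual F).E (omega2 N)) ↔
      e ∈ (ctE F).filter (extActiveP F.E (omega1 N)) := by
  obtain ⟨hpos, hE, ht, -⟩ := hT
  have hV : F.V ⊆ Icc 1 N := fun v hv => mem_Icc.2 ⟨hpos v hv, hN v hv⟩
  have hinv := compFlip_involutive F.V F.E
  have hcomp : ∀ {x y}, x ∈ F.V → reachP F.E x y → y ∈ comp F.V F.E x := fun hx h =>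
    mem_filter.2 ⟨mem_of_reachP (fun e he => ⟨(hE e he).1, (hE e he).2.1⟩) hx h, h⟩
  rw [mem_filter, mem_filter, cdual_E]
  by_cases h : e.1 ∈ F.V ∧ reachP F.E e.1 e.2
  · obtain ⟨h1, hr⟩ := h
    rw [flipEdge_mem_ctE_cdual_iff ht h1 (hcomp h1 hr), extActiveP_image_flipEdge_iff hinv]
    intro hr e₀ he₀ hr₀
    exact omega2_flipEdge_lt_iff hV (self_mem_comp h1) (hcomp h1 hr) (hcomp h1 hr₀)
      (hcomp h1 (hr₀.tail (Or.inl he₀)))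
  · refine iff_of_false (fun ⟨hct, hact⟩ => h ⟨?_, ?_⟩)
      (fun ⟨hct, hact⟩ => h ⟨(mem_ctE.1 hct).1.1, hact.2.1⟩)
    · have : compFlip F.V F.E e.1 ∈ F.V := (mem_ctE.1 hct).2.1.1
      rw [← hinv e.1]
      exact compFlip_mem this
    · exact (reachP_image_flipEdge_flipEdge hinv _ _).1 hact.2.1

theorem stmt10_general (F : PreGraph) (hT : IsTiered F) (hne : F.V.Nonempty) :
    eaP (ctE F) F.E (omega1 (F.V.max' hne)) =
      eaP (ctE (cdual F)) (cdual F).E (omega2 (F.V.max' hne)) := by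
  have hinv := flipEdge_involutive (compFlip_involutive F.V F.E)
  have hactive : (ctE (cdual F)).filter (extActiveP (cdual F).E (omega2 (F.V.max' hne))) =
      ((ctE F).filter (extActiveP F.E (omega1 (F.V.max' hne)))).image
        (flipEdge (compFlip F.V F.E)) := by
    ext e
    obtain ⟨e, rfl⟩ := hinv.surjective e
    rw [hinv.injective.mem_finset_image, flipEdge_mem_activeEdges_cdual_iff hT (F.V.le_max' ·)]
  rw [eaP, eaP, hactive, card_image_of_injective _ hinv.injective]

/-- for a tiered forest `F` with two tiers on `U`, the external activity
of `F` in `CT(F)` with respect to `ω₁` equals the external activity of the dual forest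
`F'` in `CT(F')` with respect to `ω₂`. -/
theorem stmt10 (F : PreGraph) (hT : IsTiered F) (hF : IsForest F) (hne : F.V.Nonempty) :
    eaP (ctE F) F.E (omega1 (F.V.max' hne)) =
      eaP (ctE (cdual F)) (cdual F).E (omega2 (F.V.max' hne)) :=
  stmt10_general F hT hne

end
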